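/- arXiv:2112.14338 — 2 statements merged into one kernel-verified Lean document; each statement's English description precedes it below -/
import Mathlib

section
/- In the VCG-style auction with payment y_n(ĉ) = ∑_k (r̂_k − λ_n)·x̂_{n,k}(ĉ) − [L*_{−n}(ĉ_{−n}) − L_{−n}(x̂(ĉ), ĉ_{−n})], where x̂(ĉ) maximizes the Lagrangian L(x, ĉ) = ∑_{n,k}(r̂_k − ĉ_{n,k})x_{n,k} − ∑_n λ_n(∑_k x_{n,k} − φ_n) over x ∈ X, truthful bidding is a dominant strategy: for every agent n, every true cost vector c_n, every bid c'_n, and every profile of others' bids ĉ_{−n}, the payoff y_n(c_n, ĉ_{−n}) − ∑_k c_{n,k} x̂_{n,k}(c_n, ĉ_{−n}) is at least y_n(c'_n, ĉ_{−n}) − ∑_k c_{n,k} x̂_{n,k}(c'_n, ĉ_{−n}). -/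
/-- Feasible 0-1 assignment matrices: entries in {0,1}, row sums ≤ 1, column sums ≤ 1. -/
def Feas (N K : ℕ) : Set (Fin N → Fin K → ℝ) :=
  {x | (∀ n k, x n k = 0 ∨ x n k = 1) ∧ (∀ n, ∑ k, x n k ≤ 1) ∧ (∀ k, ∑ n, x n k ≤ 1)}

/-- The Lagrangian L(x, ĉ) = ∑_{n,k}(r̂_k − ĉ_{n,k})x_{n,k} − ∑_n λ_n(∑_k x_{n,k} − φ_n). -/
def Lag {N K : ℕ} (rhat : Fin K → ℝ) (lam phi : Fin N → ℝ)
    (c : Fin N → Fin K → ℝ) (x : Fin N → Fin K → ℝ) : ℝ :=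
  (∑ n, ∑ k, (rhat k - c n k) * x n k) - ∑ n, lam n * ((∑ k, x n k) - phi n)

/-- The Lagrangian at the absence of agent n:
L_{−n}(x, ĉ_{−n}) = ∑_k ∑_{i≠n}(r̂_k − ĉ_{i,k})x_{i,k} − ∑_{i≠n} λ_i ∑_k x_{i,k} + ∑_i λ_i φ_i. -/
def LagMinus {N K : ℕ} (rhat : Fin K → ℝ) (lam phi : Fin N → ℝ) (n : Fin N)
    (c : Fin N → Fin K → ℝ) (x : Fin N → Fin K → ℝ) : ℝ :=
  (∑ k, ∑ i ∈ Finset.univ.erase n, (rhat k - c i k) * x i k)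
    - (∑ i ∈ Finset.univ.erase n, lam i * ∑ k, x i k)
    + ∑ i, lam i * phi i

lemma lag_split {N K : ℕ} (rhat : Fin K → ℝ) (lam phi : Fin N → ℝ) (n : Fin N)
    (c x : Fin N → Fin K → ℝ) :
    Lag rhat lam phi c x =
      ((∑ k, (rhat k - c n k) * x n k) - lam n * ∑ k, x n k)
        + LagMinus rhat lam phi n c x := by
  unfold Lag LagMinus
  rw [show (∑ k, ∑ i ∈ Finset.univ.erase n, (rhat k - c i k) * x i k)
      = ∑ i ∈ Finset.univ.erase n, ∑ k, (rhat k - c i k) * x i k from Finset.sum_comm]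
  rw [← Finset.add_sum_erase Finset.univ (fun i => ∑ k, (rhat k - c i k) * x i k)
    (Finset.mem_univ n)]
  rw [← Finset.add_sum_erase Finset.univ (fun i => lam i * ((∑ k, x i k) - phi i))
    (Finset.mem_univ n)]
  have : ∀ s : Finset (Fin N), ∑ i ∈ s, lam i * ((∑ k, x i k) - phi i)
      = ∑ i ∈ s, lam i * ∑ k, x i k - ∑ i ∈ s, lam i * phi i := by
    intro s; rw [← Finset.sum_sub_distrib]; congr 1; ext i; ring
  rw [this]
  rw [show ∑ i, lam i * phi i = lam n * phi n + ∑ i ∈ Finset.univ.erase n, lam i * phi i from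
    (Finset.add_sum_erase Finset.univ (fun i => lam i * phi i) (Finset.mem_univ n)).symm]
  ring

lemma lagMinus_update {N K : ℕ} (rhat : Fin K → ℝ) (lam phi : Fin N → ℝ) (n : Fin N)
    (c : Fin N → Fin K → ℝ) (b : Fin K → ℝ) (x : Fin N → Fin K → ℝ) :
    LagMinus rhat lam phi n (Function.update c n b) x = LagMinus rhat lam phi n c x := by
  unfold LagMinus
  congr 2
  apply Finset.sum_congr rfl
  intro k _
  apply Finset.sum_congr rfl
  intro i hi
  rw [Function.update_of_ne (Finset.ne_of_mem_erase hi)]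

/-- VCG-style payment: y_n(ĉ) = ∑_k (r̂_k − λ_n)·x̂_{n,k}(ĉ) − [L*_{−n}(ĉ) − L_{−n}(x̂(ĉ), ĉ)]. -/
def pay {N K : ℕ} (rhat : Fin K → ℝ) (lam phi : Fin N → ℝ)
    (xhat : (Fin N → Fin K → ℝ) → Fin N → Fin K → ℝ)
    (Lstar : Fin N → (Fin N → Fin K → ℝ) → ℝ)
    (n : Fin N) (c : Fin N → Fin K → ℝ) : ℝ :=
  (∑ k, (rhat k - lam n) * xhat c n k)
    - (Lstar n c - LagMinus rhat lam phi n c (xhat c))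

/-- truthful bidding is a dominant strategy in the cost revelation auction. -/
theorem stmt2 (N K : ℕ)
    (rhat : Fin K → ℝ) (hr : ∀ k, rhat k ∈ Set.Icc (0:ℝ) 1)
    (lam : Fin N → ℝ) (hlam : ∀ n, 0 ≤ lam n) (phi : Fin N → ℝ)
    (xhat : (Fin N → Fin K → ℝ) → Fin N → Fin K → ℝ)
    (hfeas : ∀ c, xhat c ∈ Feas N K)
    (hopt : ∀ c, ∀ x ∈ Feas N K, Lag rhat lam phi c x ≤ Lag rhat lam phi c (xhat c))
    (Lstar : Fin N → (Fin N → Fin K → ℝ) → ℝ)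
    (hLstar : ∀ n c,
      IsGreatest {s | ∃ x ∈ Feas N K, s = LagMinus rhat lam phi n c x} (Lstar n c)) :
    ∀ (n : Fin N) (ctrue cbid : Fin K → ℝ) (c : Fin N → Fin K → ℝ),
      pay rhat lam phi xhat Lstar n (Function.update c n cbid)
          - ∑ k, ctrue k * xhat (Function.update c n cbid) n k
        ≤ pay rhat lam phi xhat Lstar n (Function.update c n ctrue)
          - ∑ k, ctrue k * xhat (Function.update c n ctrue) n k := by
  intro n ctrue cbid c
  have hLs : Lstar n (Function.update c n cbid) = Lstar n (Function.update c n ctrue) := by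
    have hset : {s | ∃ x ∈ Feas N K, s = LagMinus rhat lam phi n (Function.update c n cbid) x}
        = {s | ∃ x ∈ Feas N K, s = LagMinus rhat lam phi n (Function.update c n ctrue) x} := by
      simp only [lagMinus_update]
    exact (hLstar n _).unique (hset ▸ hLstar n (Function.update c n ctrue))
  have key : ∀ b : Fin K → ℝ,
      pay rhat lam phi xhat Lstar n (Function.update c n b)
        - ∑ k, ctrue k * xhat (Function.update c n b) n k
      = Lag rhat lam phi (Function.update c n ctrue) (xhat (Function.update c n b))
        - Lstar n (Function.update c n b) := by
    intro b
    unfold pay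
    rw [lag_split rhat lam phi n, lagMinus_update, lagMinus_update]
    simp only [Function.update_self]
    have hsum : ∑ k, (rhat k - lam n) * xhat (Function.update c n b) n k
          - ∑ k, ctrue k * xhat (Function.update c n b) n k
        = ∑ k, (rhat k - ctrue k) * xhat (Function.update c n b) n k
          - lam n * ∑ k, xhat (Function.update c n b) n k := by
      rw [Finset.mul_sum, ← Finset.sum_sub_distrib, ← Finset.sum_sub_distrib]
      apply Finset.sum_congr rfl; intro k _; ring
    linarith
  rw [key cbid, key ctrue, hLs]
  have := hopt (Function.update c n ctrue) (xhat (Function.update c n cbid))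
    (hfeas (Function.update c n cbid))
  linarith
end

section
/- The LP benchmark S† upper-bounds the benchmark S*: for any policy x(·) mapping disclosed costs c ∈ [c_min, 1]^{N×K} to feasible assignments in X satisfying the fairness constraints E_c[∑_k x_{n,k}(c)] ≤ φ_n for all n, the expected social welfare E_c[∑_{k,n}(r̄_k − c_{n,k})x_{n,k}(c)] is at most S† = max{∑_k (r̄_k − c_min)p_k : ∑_k p_k ≤ Φ, p_k ∈ [0,1]}, where Φ = ∑_n φ_n. -/
open MeasureTheory

lemma abel_sum (b u : ℕ → ℝ) (m : ℕ) :
    ∑ j ∈ Finset.range m, b j * u j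
      = (∑ i ∈ Finset.range m, (b i - b (i+1)) * (∑ j ∈ Finset.range (i+1), u j))
        + b m * ∑ j ∈ Finset.range m, u j := by
  induction m with
  | zero => simp
  | succ m ih =>
    rw [Finset.sum_range_succ (fun j => b j * u j), ih,
      Finset.sum_range_succ (fun i => (b i - b (i+1)) * (∑ j ∈ Finset.range (i+1), u j)),
      Finset.sum_range_succ u]
    ring

lemma knapsack (b u : ℕ → ℝ) (K : ℕ) (hb : ∀ i, b (i+1) ≤ b i) (hbK : b K = 0)
    (hu0 : ∀ j, 0 ≤ u j) (hu1 : ∀ j, u j ≤ 1) (U : ℝ)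
    (hU : ∑ j ∈ Finset.range K, u j ≤ U) :
    ∑ j ∈ Finset.range K, b j * u j
      ≤ ∑ i ∈ Finset.range K, (b i - b (i+1)) * min ((i:ℝ)+1) U := by
  rw [abel_sum b u K, hbK, zero_mul, add_zero]
  apply Finset.sum_le_sum
  intro i hi
  have hd : 0 ≤ b i - b (i+1) := sub_nonneg.2 (hb i)
  refine mul_le_mul_of_nonneg_left (le_min ?_ ?_) hd
  · calc ∑ j ∈ Finset.range (i+1), u j ≤ ∑ _j ∈ Finset.range (i+1), (1:ℝ) :=
          Finset.sum_le_sum (fun j _ => hu1 j)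
      _ = (i:ℝ)+1 := by simp
  · calc ∑ j ∈ Finset.range (i+1), u j ≤ ∑ j ∈ Finset.range K, u j := by
          apply Finset.sum_le_sum_of_subset_of_nonneg
          · exact Finset.range_subset_range.2 (Finset.mem_range.1 hi)
          · intro j _ _; exact hu0 j
      _ ≤ U := hU

lemma telescope_min (T : ℝ) (hT : 0 ≤ T) (n : ℕ) :
    ∑ j ∈ Finset.range n, (min ((j:ℝ)+1) T - min (j:ℝ) T) = min (n:ℝ) T := by
  have h := Finset.sum_range_sub (fun j : ℕ => min (j:ℝ) T) n
  simp only [Nat.cast_succ] at h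
  rw [h, Nat.cast_zero, min_eq_left hT, sub_zero]

lemma greedy_eq (b : ℕ → ℝ) (K : ℕ) (hbK : b K = 0) (T : ℝ) (hT : 0 ≤ T) :
    ∑ j ∈ Finset.range K, b j * (min ((j:ℝ)+1) T - min (j:ℝ) T)
      = ∑ i ∈ Finset.range K, (b i - b (i+1)) * min ((i:ℝ)+1) T := by
  rw [abel_sum (u := fun j => min ((j:ℝ)+1) T - min (j:ℝ) T), hbK, zero_mul, add_zero]
  apply Finset.sum_congr rfl
  intro i _
  rw [telescope_min T hT (i+1), Nat.cast_succ]

lemma int_min {Ω : Type*} [MeasurableSpace Ω] (μ : Measure Ω) [IsFiniteMeasure μ]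
    (a : ℝ) (f : Ω → ℝ)
    (hf : Integrable f μ) : Integrable (fun ω => min a (f ω)) μ := by
  have h : ∀ ω, min a (f ω) = (a + f ω - |a - f ω|)/2 := by
    intro ω
    rcases le_total a (f ω) with h | h
    · rw [min_eq_left h, abs_of_nonpos (by linarith)]; ring
    · rw [min_eq_right h, abs_of_nonneg (by linarith)]; ring
  simp only [h]
  exact (((integrable_const a).add hf).sub ((integrable_const a).sub hf).abs).div_const 2

/-- the LP benchmark S† upper-bounds the benchmark S*: any policy
mapping disclosed costs to feasible assignments and satisfying the expected
fairness constraints achieves expected social welfare at most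
S† = sup{∑_k (r̄_k − c_min)p_k : ∑_k p_k ≤ Φ, p_k ∈ [0,1]}, Φ = ∑_n φ_n. -/
theorem stmt6 {Ω : Type*} [MeasurableSpace Ω] (μ : Measure Ω) [IsProbabilityMeasure μ]
    (N K : ℕ) (hN : 0 < N) (hK : 0 < K)
    (cmin : ℝ) (hcmin : cmin ∈ Set.Icc (0:ℝ) 1)
    (rbar : Fin K → ℝ) (hr : ∀ k, rbar k ∈ Set.Icc (0:ℝ) 1)
    (φ : Fin N → ℝ) (hφ : ∀ n, φ n ∈ Set.Icc (0:ℝ) 1)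
    (c : Ω → Fin N → Fin K → ℝ) (hc : ∀ ω n k, c ω n k ∈ Set.Icc cmin 1)
    (x : Ω → Fin N → Fin K → ℝ) (hxF : ∀ ω, x ω ∈ Feas N K)
    (hint1 : ∀ n, Integrable (fun ω => ∑ k, x ω n k) μ)
    (hfair : ∀ n, (∫ ω, (∑ k, x ω n k) ∂μ) ≤ φ n)
    (hint2 : Integrable (fun ω => ∑ n, ∑ k, (rbar k - c ω n k) * x ω n k) μ) :
    (∫ ω, (∑ n, ∑ k, (rbar k - c ω n k) * x ω n k) ∂μ)
      ≤ sSup {s : ℝ | ∃ p : Fin K → ℝ, (∀ k, p k ∈ Set.Icc (0:ℝ) 1) ∧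
          (∑ k, p k ≤ ∑ n, φ n) ∧ s = ∑ k, (rbar k - cmin) * p k} := by
  classical
  set Φ : ℝ := ∑ n, φ n with hΦdef
  have hΦ0 : 0 ≤ Φ := Finset.sum_nonneg (fun n _ => (hφ n).1)
  set a : Fin K → ℝ := fun k => max (rbar k - cmin) 0 with hadef
  have ha0 : ∀ k, 0 ≤ a k := fun k => le_max_right _ _
  have haub : ∀ k, rbar k - cmin ≤ a k := fun k => le_max_left _ _
  set σ : Equiv.Perm (Fin K) := Tuple.sort (fun k => -(a k)) with hσdef
  have hσanti : ∀ i j : Fin K, i ≤ j → a (σ j) ≤ a (σ i) := by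
    intro i j hij
    have h := Tuple.monotone_sort (fun k => -(a k)) hij
    simp only [Function.comp_apply] at h
    rw [← hσdef] at h
    linarith
  set b : ℕ → ℝ := fun i => if h : i < K then a (σ ⟨i, h⟩) else 0 with hbdef
  have hbval : ∀ i : Fin K, b (i : ℕ) = a (σ i) := by
    intro i
    simp only [hbdef, dif_pos i.isLt, Fin.eta]
  have hb0 : ∀ i, 0 ≤ b i := by
    intro i
    by_cases h : i < K
    · simp only [hbdef, dif_pos h]; exact ha0 _
    · simp only [hbdef, dif_neg h]; exact le_refl 0
  have hbK : b K = 0 := by simp only [hbdef, dif_neg (lt_irrefl K)]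
  have hbanti : ∀ i, b (i+1) ≤ b i := by
    intro i
    by_cases h : i + 1 < K
    · have h' : i < K := Nat.lt_of_succ_lt h
      simp only [hbdef, dif_pos h, dif_pos h']
      exact hσanti ⟨i, h'⟩ ⟨i+1, h⟩ (by simp [Fin.le_def])
    · simp only [hbdef, dif_neg h]
      by_cases h' : i < K
      · simp only [dif_pos h']; exact ha0 _
      · simp only [dif_neg h']; exact le_refl 0
  have hx0 : ∀ ω n k, 0 ≤ x ω n k := by
    intro ω n k
    rcases (hxF ω).1 n k with h | h
    · rw [h]
    · rw [h]; exact zero_le_one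
  set T : Ω → ℝ := fun ω => ∑ n, ∑ k, x ω n k with hTdef
  have hTint : Integrable T μ := by
    simp only [hTdef]
    exact integrable_finset_sum _ (fun n _ => hint1 n)
  -- pointwise key inequality
  have hkey : ∀ ω, ∑ n, ∑ k, (rbar k - c ω n k) * x ω n k
      ≤ ∑ i ∈ Finset.range K, (b i - b (i+1)) * min ((i:ℝ)+1) (T ω) := by
    intro ω
    set u : ℕ → ℝ := fun i => if h : i < K then ∑ n, x ω n (σ ⟨i, h⟩) else 0 with hudef
    have huval : ∀ i : Fin K, u (i : ℕ) = ∑ n, x ω n (σ i) := by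
      intro i; simp only [hudef, dif_pos i.isLt, Fin.eta]
    have hu0 : ∀ j, 0 ≤ u j := by
      intro j
      by_cases h : j < K
      · simp only [hudef, dif_pos h]
        exact Finset.sum_nonneg (fun n _ => hx0 ω n _)
      · simp only [hudef, dif_neg h]; exact le_refl 0
    have hu1 : ∀ j, u j ≤ 1 := by
      intro j
      by_cases h : j < K
      · simp only [hudef, dif_pos h]
        exact (hxF ω).2.2 _
      · simp only [hudef, dif_neg h]; exact zero_le_one
    have hsum_u : ∑ j ∈ Finset.range K, u j = T ω := by
      rw [← Fin.sum_univ_eq_sum_range u K,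
        Finset.sum_congr rfl (fun i _ => huval i),
        Equiv.sum_comp σ (fun k => ∑ n, x ω n k), hTdef]
      exact Finset.sum_comm
    calc ∑ n, ∑ k, (rbar k - c ω n k) * x ω n k
        ≤ ∑ n, ∑ k, a k * x ω n k :=
          Finset.sum_le_sum (fun n _ => Finset.sum_le_sum (fun k _ =>
            mul_le_mul_of_nonneg_right
              (le_trans (by linarith [(hc ω n k).1]) (haub k)) (hx0 ω n k)))
      _ = ∑ k, a k * ∑ n, x ω n k := by
          rw [Finset.sum_comm]
          exact Finset.sum_congr rfl (fun k _ => (Finset.mul_sum _ _ _).symm)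
      _ = ∑ j ∈ Finset.range K, b j * u j := by
          rw [← Equiv.sum_comp σ (fun k => a k * ∑ n, x ω n k),
            ← Fin.sum_univ_eq_sum_range (fun j => b j * u j) K]
          exact Finset.sum_congr rfl (fun i _ => by rw [hbval i, huval i])
      _ ≤ _ := knapsack b u K hbanti hbK hu0 hu1 (T ω) (le_of_eq hsum_u)
  have hminint : ∀ i : ℕ, Integrable (fun ω => min ((i:ℝ)+1) (T ω)) μ :=
    fun i => int_min μ _ _ hTint
  have hI : Integrable
      (fun ω => ∑ i ∈ Finset.range K, (b i - b (i+1)) * min ((i:ℝ)+1) (T ω)) μ :=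
    integrable_finset_sum _ (fun i _ => (hminint i).const_mul _)
  have h1 : (∫ ω, (∑ n, ∑ k, (rbar k - c ω n k) * x ω n k) ∂μ)
      ≤ ∫ ω, ∑ i ∈ Finset.range K, (b i - b (i+1)) * min ((i:ℝ)+1) (T ω) ∂μ :=
    integral_mono hint2 hI hkey
  have hTle : (∫ ω, T ω ∂μ) ≤ Φ := by
    simp only [hTdef]
    rw [integral_finset_sum _ (fun n _ => hint1 n)]
    exact Finset.sum_le_sum (fun n _ => hfair n)
  have h2 : (∫ ω, ∑ i ∈ Finset.range K, (b i - b (i+1)) * min ((i:ℝ)+1) (T ω) ∂μ)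
      = ∑ i ∈ Finset.range K, (b i - b (i+1)) * ∫ ω, min ((i:ℝ)+1) (T ω) ∂μ := by
    rw [integral_finset_sum _ (fun i _ => (hminint i).const_mul _)]
    exact Finset.sum_congr rfl (fun i _ => integral_const_mul _ _)
  set T' : ℝ := min Φ (K : ℝ) with hT'def
  have hT'0 : 0 ≤ T' := le_min hΦ0 (Nat.cast_nonneg K)
  have h3 : ∀ i ∈ Finset.range K,
      (b i - b (i+1)) * ∫ ω, min ((i:ℝ)+1) (T ω) ∂μ
        ≤ (b i - b (i+1)) * min ((i:ℝ)+1) T' := by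
    intro i hi
    have hd : 0 ≤ b i - b (i+1) := sub_nonneg.2 (hbanti i)
    refine mul_le_mul_of_nonneg_left ?_ hd
    have hiK : (i:ℝ)+1 ≤ (K:ℝ) := by
      exact_mod_cast Nat.succ_le_of_lt (Finset.mem_range.1 hi)
    have e1 : (∫ ω, min ((i:ℝ)+1) (T ω) ∂μ) ≤ (i:ℝ)+1 := by
      calc (∫ ω, min ((i:ℝ)+1) (T ω) ∂μ) ≤ ∫ _ω, ((i:ℝ)+1) ∂μ :=
            integral_mono (hminint i) (integrable_const _) (fun ω => min_le_left _ _)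
        _ = (i:ℝ)+1 := by simp
    have e2 : (∫ ω, min ((i:ℝ)+1) (T ω) ∂μ) ≤ Φ :=
      le_trans (integral_mono (hminint i) hTint (fun ω => min_le_right _ _)) hTle
    exact le_min e1 (le_min e2 (le_trans e1 hiK))
  -- the candidate p achieving the bound
  set ustar : ℕ → ℝ := fun j => min ((j:ℝ)+1) T' - min (j:ℝ) T' with husdef
  have hus0 : ∀ j, 0 ≤ ustar j := by
    intro j
    exact sub_nonneg.2 (min_le_min (by linarith) (le_refl T'))
  have hus1 : ∀ j, ustar j ≤ 1 := by
    intro j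
    simp only [husdef]
    rcases le_total T' (j : ℝ) with h | h
    · rw [min_eq_right h, min_eq_right (by linarith)]; linarith
    · rw [min_eq_left h]
      have := min_le_left ((j:ℝ)+1) T'
      linarith
  set p : Fin K → ℝ := fun k => if cmin ≤ rbar k then ustar ((σ.symm k : Fin K) : ℕ) else 0
    with hpdef
  have hpmem : ∀ k, p k ∈ Set.Icc (0:ℝ) 1 := by
    intro k
    simp only [hpdef]
    by_cases h : cmin ≤ rbar k
    · rw [if_pos h]; exact ⟨hus0 _, hus1 _⟩
    · rw [if_neg h]; exact ⟨le_refl 0, zero_le_one⟩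
  have hussum : ∑ j ∈ Finset.range K, ustar j = min (K:ℝ) T' :=
    telescope_min T' hT'0 K
  have hps : ∑ k, p k ≤ Φ := by
    calc ∑ k, p k ≤ ∑ k : Fin K, ustar ((σ.symm k : Fin K) : ℕ) := by
          refine Finset.sum_le_sum (fun k _ => ?_)
          simp only [hpdef]
          by_cases h : cmin ≤ rbar k
          · rw [if_pos h]
          · rw [if_neg h]; exact hus0 _
      _ = ∑ i : Fin K, ustar (i : ℕ) := Equiv.sum_comp σ.symm (fun i : Fin K => ustar (i:ℕ))
      _ = ∑ j ∈ Finset.range K, ustar j := Fin.sum_univ_eq_sum_range _ K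
      _ = min (K:ℝ) T' := hussum
      _ ≤ Φ := le_trans (min_le_right _ _) (min_le_left _ _)
  have hval : ∑ k, (rbar k - cmin) * p k
      = ∑ i ∈ Finset.range K, (b i - b (i+1)) * min ((i:ℝ)+1) T' := by
    calc ∑ k, (rbar k - cmin) * p k
        = ∑ i : Fin K, (rbar (σ i) - cmin) * p (σ i) :=
          (Equiv.sum_comp σ (fun k => (rbar k - cmin) * p k)).symm
      _ = ∑ i : Fin K, b (i : ℕ) * ustar (i : ℕ) := by
          refine Finset.sum_congr rfl (fun i _ => ?_)
          by_cases h : cmin ≤ rbar (σ i)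
          · simp only [hpdef, if_pos h, Equiv.symm_apply_apply]
            rw [hbval i]
            have : a (σ i) = rbar (σ i) - cmin := by
              simp only [hadef]
              exact max_eq_left (sub_nonneg.2 h)
            rw [this]
          · simp only [hpdef, if_neg h, mul_zero]
            rw [hbval i]
            have : a (σ i) = 0 := by
              simp only [hadef]
              exact max_eq_right (sub_nonpos.2 (le_of_not_ge h))
            rw [this, zero_mul]
      _ = ∑ j ∈ Finset.range K, b j * ustar j :=
          Fin.sum_univ_eq_sum_range (fun j => b j * ustar j) K
      _ = _ := greedy_eq b K hbK T' hT'0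
  have hmem : (∑ i ∈ Finset.range K, (b i - b (i+1)) * min ((i:ℝ)+1) T')
      ∈ {s : ℝ | ∃ p : Fin K → ℝ, (∀ k, p k ∈ Set.Icc (0:ℝ) 1) ∧
          (∑ k, p k ≤ Φ) ∧ s = ∑ k, (rbar k - cmin) * p k} :=
    ⟨p, hpmem, hps, hval.symm⟩
  have hbdd : BddAbove {s : ℝ | ∃ p : Fin K → ℝ, (∀ k, p k ∈ Set.Icc (0:ℝ) 1) ∧
      (∑ k, p k ≤ Φ) ∧ s = ∑ k, (rbar k - cmin) * p k} := by
    refine ⟨(K : ℝ), ?_⟩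
    rintro s ⟨q, hq, -, rfl⟩
    calc ∑ k, (rbar k - cmin) * q k ≤ ∑ _k : Fin K, (1:ℝ) := by
          refine Finset.sum_le_sum (fun k _ => ?_)
          nlinarith [(hq k).1, (hq k).2, (hr k).2, hcmin.1]
      _ = (K : ℝ) := by simp
  calc (∫ ω, (∑ n, ∑ k, (rbar k - c ω n k) * x ω n k) ∂μ)
      ≤ ∑ i ∈ Finset.range K, (b i - b (i+1)) * ∫ ω, min ((i:ℝ)+1) (T ω) ∂μ :=
        le_trans h1 (le_of_eq h2)
    _ ≤ ∑ i ∈ Finset.range K, (b i - b (i+1)) * min ((i:ℝ)+1) T' :=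
        Finset.sum_le_sum h3
    _ ≤ _ := le_csSup hbdd hmem
end
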